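/- If a symmetric positive definite matrix A arises from a coercive and bounded bilinear form with coercivity constant α and continuity constant C with respect to a basis with Riesz constants m and M (m‖x‖² ≤ ‖Σ x_i φ_i‖² ≤ M‖x‖²), then the spectral condition number satisfies κ(A) ≤ (C M)/(α m). -/

import Mathlib

/-- Condition number bound for the stiffness matrix: if `A_{ij} = A_h(φ_j, φ_i)`
for a symmetric bilinear form with coercivity constant `α` and continuity
constant `C` with respect to a basis with Riesz constants `m`, `M`, then every
eigenvalue lies in `[α m, C M]`, so the spectral condition number satisfies
`κ(A) = λ₁/λ₂ ≤ C M / (α m)` for any eigenvalues `λ₁, λ₂`. -/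
theorem stiffness_matrix_condition_number {V : Type*} [NormedAddCommGroup V]
    [InnerProductSpace ℝ V] {n : ℕ}
    (φ : Fin n → V) (m M α C : ℝ)
    (hm : 0 < m) (hM : 0 < M) (hα : 0 < α) (hC : 0 < C)
    (Ah : V → V → ℝ)
    (hsymm : ∀ v w, Ah v w = Ah w v)
    (hlin₁ : ∀ (a : ℝ) (v v' w : V), Ah (a • v + v') w = a * Ah v w + Ah v' w)
    (hlin₂ : ∀ (a : ℝ) (v w w' : V), Ah v (a • w + w') = a * Ah v w + Ah v w')
    (hriesz : ∀ x : Fin n → ℝ,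
      m * ∑ i, (x i) ^ 2 ≤ ‖∑ i, x i • φ i‖ ^ 2 ∧
      ‖∑ i, x i • φ i‖ ^ 2 ≤ M * ∑ i, (x i) ^ 2)
    (hcoer : ∀ v, α * ‖v‖ ^ 2 ≤ Ah v v)
    (hbdd : ∀ v w, |Ah v w| ≤ C * ‖v‖ * ‖w‖)
    (A : Matrix (Fin n) (Fin n) ℝ)
    (hA : ∀ i j, A i j = Ah (φ j) (φ i)) :
    (∀ (lam : ℝ) (x : Fin n → ℝ), x ≠ 0 → A.mulVec x = lam • x →
      α * m ≤ lam ∧ lam ≤ C * M) ∧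
    (∀ (lam₁ lam₂ : ℝ) (x y : Fin n → ℝ), x ≠ 0 → y ≠ 0 →
      A.mulVec x = lam₁ • x → A.mulVec y = lam₂ • y →
      lam₁ / lam₂ ≤ C * M / (α * m)) := by
  have hzero : ∀ w, Ah 0 w = 0 := by
    intro w
    have h := hlin₁ 1 0 0 w
    simp at h
    linarith
  have hsum : ∀ (s : Finset (Fin n)) (x : Fin n → ℝ) (w : V),
      Ah (∑ i ∈ s, x i • φ i) w = ∑ i ∈ s, x i * Ah (φ i) w := by
    intro s
    induction s using Finset.induction with
    | empty => intro x w; simp [hzero]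
    | insert _ _ h ih =>
      intro x w
      rw [Finset.sum_insert h, Finset.sum_insert h, hlin₁, ih]
  have key : ∀ (lam : ℝ) (x : Fin n → ℝ), x ≠ 0 → A.mulVec x = lam • x →
      α * m ≤ lam ∧ lam ≤ C * M := by
    intro lam x hx hev
    set v := ∑ i, x i • φ i with hv
    obtain ⟨i₀, hi₀⟩ := Function.ne_iff.mp hx
    have hS : 0 < ∑ i, (x i) ^ 2 := by
      apply Finset.sum_pos' (fun i _ => sq_nonneg _)
      have hi₀' : x i₀ ≠ 0 := by simpa using hi₀
      exact ⟨i₀, Finset.mem_univ _, by positivity⟩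
    have hmul : ∀ i, A.mulVec x i = Ah v (φ i) := by
      intro i
      rw [hv, hsum]
      simp only [Matrix.mulVec, dotProduct, hA]
      exact Finset.sum_congr rfl fun j _ => mul_comm _ _
    have hAvv : lam * ∑ i, (x i) ^ 2 = Ah v v := by
      have h1 : Ah v v = ∑ i, x i * Ah (φ i) v := by rw [hv]; exact hsum _ _ _
      have h2 : ∀ i, x i * Ah (φ i) v = x i * A.mulVec x i := by
        intro i; rw [hmul, hsymm]
      have h3 : ∀ i, x i * A.mulVec x i = lam * (x i) ^ 2 := by
        intro i; rw [hev]; simp [Pi.smul_apply, smul_eq_mul]; ring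
      rw [h1, Finset.sum_congr rfl fun i _ => (h2 i).trans (h3 i),
        ← Finset.mul_sum]
    obtain ⟨hr1, hr2⟩ := hriesz x
    constructor
    · have : α * (m * ∑ i, (x i) ^ 2) ≤ α * ‖v‖ ^ 2 :=
        mul_le_mul_of_nonneg_left hr1 hα.le
      have h4 : α * m * ∑ i, (x i) ^ 2 ≤ lam * ∑ i, (x i) ^ 2 := by
        rw [hAvv]
        calc α * m * ∑ i, (x i) ^ 2 = α * (m * ∑ i, (x i) ^ 2) := by ring
        _ ≤ α * ‖v‖ ^ 2 := this
        _ ≤ Ah v v := hcoer v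
      exact le_of_mul_le_mul_right h4 hS
    · have h5 : Ah v v ≤ C * M * ∑ i, (x i) ^ 2 := by
        calc Ah v v ≤ |Ah v v| := le_abs_self _
        _ ≤ C * ‖v‖ * ‖v‖ := hbdd v v
        _ = C * ‖v‖ ^ 2 := by ring
        _ ≤ C * (M * ∑ i, (x i) ^ 2) := mul_le_mul_of_nonneg_left hr2 hC.le
        _ = C * M * ∑ i, (x i) ^ 2 := by ring
      rw [← hAvv] at h5
      exact le_of_mul_le_mul_right h5 hS
  refine ⟨key, ?_⟩
  intro lam₁ lam₂ x y hx hy hex hey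
  obtain ⟨_, h1⟩ := key lam₁ x hx hex
  obtain ⟨h2, _⟩ := key lam₂ y hy hey
  exact div_le_div₀ (by positivity) h1 (by positivity) h2
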